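/- Singleton implementable search orders exactly on the boundary (uniform case): let A ∈ (0,1) and let p1, p2 ∈ (0,1] satisfy p1 ≤ A, p2 ≤ A and |p1 − p2| ≤ 1 − A. Then φ(p1,p2) contains exactly one element if and only if M1(p2)/p1 + M2(p1)/p2 + p1·p2 = 1. -/
import Mathlib


/-- Demand of seller 1 when ranked second (uniform match utilities). -/
noncomputable def D12 (A p1 p2 : ℝ) : ℝ := -A^2/2 + p1^2/2 - p1*p2 + A - p1 + p2

/-- Demand of seller 2 when ranked second (uniform match utilities). -/
noncomputable def D22 (A p1 p2 : ℝ) : ℝ := -A^2/2 + p2^2/2 - p1*p2 + A + p1 - p2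

/-- The bonus from being ranked first instead of second (uniform case). -/
noncomputable def bonus (A p1 p2 : ℝ) : ℝ := (1-A)^2 - (1/2)*(p1-p2)^2

/-- Seller 1's optimal deviation value when ranked second. -/
noncomputable def M1 (A p2 : ℝ) : ℝ :=
  sSup ((fun p' => p' * D12 A p' p2) '' Set.Icc (0:ℝ) 1)

/-- Seller 2's optimal deviation value when ranked second. -/
noncomputable def M2 (A p1 : ℝ) : ℝ :=
  sSup ((fun p' => p' * D22 A p1 p') '' Set.Icc (0:ℝ) 1)

/-- The function whose nonpositivity characterizes implementable prices. -/
noncomputable def H (A p1 p2 : ℝ) : ℝ := M1 A p2 / p1 + M2 A p1 / p2 + p1*p2 - 1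

/-- The set of implementable prices. -/
def implementableP (A : ℝ) : Set (ℝ × ℝ) :=
  {q | 0 < q.1 ∧ q.1 ≤ 1 ∧ 0 < q.2 ∧ q.2 ≤ 1 ∧ H A q.1 q.2 ≤ 0}

/-- The set of implementable search orders at prices `(p1, p2)`. -/
def phi (A p1 p2 : ℝ) : Set ℝ :=
  {α | α ∈ Set.Icc (0:ℝ) 1
    ∧ M1 A p2 ≤ p1 * D12 A p1 p2 + α * p1 * bonus A p1 p2
    ∧ M2 A p1 ≤ p2 * D22 A p1 p2 + (1-α) * p2 * bonus A p1 p2}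

lemma le_M1 (A p1 p2 : ℝ) (h : p1 ∈ Set.Icc (0:ℝ) 1) :
    p1 * D12 A p1 p2 ≤ M1 A p2 := by
  apply le_csSup
  · exact (isCompact_Icc.image (by unfold D12; fun_prop)).bddAbove
  · exact Set.mem_image_of_mem _ h

lemma le_M2 (A p1 p2 : ℝ) (h : p2 ∈ Set.Icc (0:ℝ) 1) :
    p2 * D22 A p1 p2 ≤ M2 A p1 := by
  apply le_csSup
  · exact (isCompact_Icc.image (by unfold D22; fun_prop)).bddAbove
  · exact Set.mem_image_of_mem _ h

/-- Singleton implementable search orders exactly on the boundary (uniform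
case): `φ(p1,p2)` has exactly one element iff
`M1(p2)/p1 + M2(p1)/p2 + p1·p2 = 1`. -/
theorem phi_singleton_iff_boundary
    (A p1 p2 : ℝ) (hA : A ∈ Set.Ioo (0:ℝ) 1)
    (hp1 : p1 ∈ Set.Ioc (0:ℝ) 1) (hp2 : p2 ∈ Set.Ioc (0:ℝ) 1)
    (hp1A : p1 ≤ A) (hp2A : p2 ≤ A) (hgap : |p1 - p2| ≤ 1 - A) :
    (∃! α : ℝ, α ∈ phi A p1 p2) ↔ M1 A p2 / p1 + M2 A p1 / p2 + p1*p2 = 1 := by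
  obtain ⟨hA0, hA1⟩ := hA
  obtain ⟨hp1pos, hp1le⟩ := hp1
  obtain ⟨hp2pos, hp2le⟩ := hp2
  obtain ⟨hg1, hg2⟩ := abs_le.mp hgap
  have hB : 0 < bonus A p1 p2 := by unfold bonus; nlinarith
  have hm1 : p1 * D12 A p1 p2 ≤ M1 A p2 := le_M1 A p1 p2 ⟨hp1pos.le, hp1le⟩
  have hm2 : p2 * D22 A p1 p2 ≤ M2 A p1 := le_M2 A p1 p2 ⟨hp2pos.le, hp2le⟩
  set m1 := M1 A p2 with hm1def
  set m2 := M2 A p1 with hm2def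
  set B := bonus A p1 p2 with hBdef
  set d1 := D12 A p1 p2 with hd1def
  set d2 := D22 A p1 p2 with hd2def
  have hp1B : 0 < p1 * B := mul_pos hp1pos hB
  have hp2B : 0 < p2 * B := mul_pos hp2pos hB
  set a := (m1 - p1*d1)/(p1*B) with hadef
  set b := (m2 - p2*d2)/(p2*B) with hbdef
  have ha0 : 0 ≤ a := div_nonneg (by linarith) hp1B.le
  have hb0 : 0 ≤ b := div_nonneg (by linarith) hp2B.le
  have haB : a * (p1*B) = m1 - p1*d1 := div_mul_cancel₀ _ hp1B.ne'
  have hbB : b * (p2*B) = m2 - p2*d2 := div_mul_cancel₀ _ hp2B.ne'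
  set T := p2*m1 + p1*m2 - p1*p2 + p1^2*p2^2 with hTdef
  have hd : d1 + d2 + B + p1*p2 = 1 := by
    simp only [hd1def, hd2def, hBdef]; unfold D12 D22 bonus; ring
  have hab : (a + b - 1) * (p1*p2*B) = T := by
    linear_combination p2*haB + p1*hbB - (p1*p2)*hd - hTdef
  have hmem : ∀ α, α ∈ phi A p1 p2 ↔ (0 ≤ α ∧ α ≤ 1 ∧ a ≤ α ∧ α ≤ 1 - b) := by
    intro α
    simp only [phi, Set.mem_setOf_eq, Set.mem_Icc, ← hm1def, ← hm2def, ← hBdef,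
      ← hd1def, ← hd2def]
    constructor
    · rintro ⟨⟨h0, h1⟩, hc1, hc2⟩
      refine ⟨h0, h1, ?_, ?_⟩
      · rw [hadef, div_le_iff₀ hp1B]
        have e : α*(p1*B) = α*p1*B := by ring
        linarith
      · have hb' : b ≤ 1 - α := by
          rw [hbdef, div_le_iff₀ hp2B]
          have e : (1-α)*(p2*B) = (1-α)*p2*B := by ring
          linarith
        linarith
    · rintro ⟨h0, h1, hc1, hc2⟩
      refine ⟨⟨h0, h1⟩, ?_, ?_⟩
      · rw [hadef, div_le_iff₀ hp1B] at hc1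
        have e : α*(p1*B) = α*p1*B := by ring
        linarith
      · have hb' : b ≤ 1 - α := by linarith
        rw [hbdef, div_le_iff₀ hp2B] at hb'
        have e : (1-α)*(p2*B) = (1-α)*p2*B := by ring
        linarith
  have hTiff : (m1 / p1 + m2 / p2 + p1*p2 = 1) ↔ T = 0 := by
    constructor
    · intro h; rw [hTdef]; field_simp at h; linear_combination h
    · intro h
      have h1 : p1 ≠ 0 := hp1pos.ne'
      have h2 : p2 ≠ 0 := hp2pos.ne'
      field_simp
      linear_combination h - hTdef
  rw [hTiff]
  have habiff : T = 0 ↔ a + b = 1 := by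
    constructor
    · intro h
      have := hab.trans h
      rcases mul_eq_zero.mp this with h' | h'
      · linarith
      · exact absurd h' (by positivity)
    · intro h; rw [← hab, h]; ring
  rw [habiff]
  constructor
  · rintro ⟨α, hα, huniq⟩
    by_contra hne
    rcases lt_or_gt_of_ne hne with hlt | hgt
    · have hA1 : a ∈ phi A p1 p2 := by
        rw [hmem]; exact ⟨ha0, by linarith, le_refl a, by linarith⟩
      have hA2 : (1 - b) ∈ phi A p1 p2 := by
        rw [hmem]; exact ⟨by linarith, by linarith, by linarith, le_refl _⟩
      have := (huniq a hA1).trans (huniq (1-b) hA2).symm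
      linarith
    · rw [hmem] at hα; linarith [hα.2.2.1, hα.2.2.2]
  · intro hsum
    exact ⟨a, (hmem a).mpr ⟨ha0, by linarith, le_refl a, by linarith⟩,
      fun y hy => by
        have h := (hmem y).mp hy
        linarith [h.2.2.1, h.2.2.2]⟩
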